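/- Suppose f satisfies quadratic growth with parameter α > 0 w.r.t. K. Denote h_1 = f(x_1) − f* and M* = max{ (β/α)(4 + 8dμ²D_{F*}²), 1/2 } for some μ > 0. Consider sequences generated as follows: x_1 ∈ V; at each step t ≥ 1, x_t = ∑_{i=1}^{k_t} λ_i v_i is a convex combination of vertices v_i ∈ V, v_{k_t+1} ∈ argmin_{u∈V} ( uᵀ∇f(x_t) + βρ_t‖u − x_t‖² ) where ρ_t ∈ [ρ_t*/2, ρ_t*] with ρ_t* = min{ √d·μ·dist(x_t, X*), 1 } / (2M*), and x_{t+1} minimizes either x ↦ xᵀ∇f(x_t) + (β/2)‖x − x_t‖² or f itself over conv(v_1,…,v_{k_t+1}). Assume additionally that for every t, letting x_t* ∈ X* be the point of X* closest to x_t, there exist Δ*_i ∈ [0,λ_i] and z ∈ F* such that x_t* = ∑_{i=1}^{k_t} (λ_i − Δ*_i)v_i + (∑Δ*_i)z and ∑_{i=1}^{k_t} Δ*_i ≤ min{ √d·μ·‖x_t − x_t*‖, 1 }. Then for all t ≥ 1: f(x_t) − f* ≤ h_1·exp(−3(t−1)/(16M*)). -/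

import Mathlib

/-!
Each step contracts the gap `h = f x - f*` by the factor `1 - 3 / (16 M*)`. Let `x*` be the
optimum nearest to `x`, written as `x* = ∑ (λᵢ - Δᵢ) vᵢ + Δ z` with `z ∈ F*`, `Δ = ∑ Δᵢ`, and
let `γ = min (√d μ ‖x - x*‖) 1`, so that `ρ = η γ` with `η ∈ [1/(4M*), 1/(2M*)]`. The point
`y = x + η ((x* - x) + Δ (w - z))` lies in the hull of the active vertices and the new vertex `w`,
so by smoothness the step does at least as well as the quadratic model at `y`. Convexity gives
`⟪∇f x, x* - x⟫ ≤ -h`, and the optimality of `w` against the vertices of `F*`, hence against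
`z ∈ conv (V ∩ F*)`, bounds `⟪∇f x, w - z⟫`. What remains is a second-order term at most
`β η² (2 + 4 d μ² D²) ‖x - x*‖²`, which quadratic growth turns into `M* η² h`; finally
`1 - η + M* η² ≤ 1 - 3 / (16 M*)` and `1 - u ≤ exp (-u)`.
-/

open scoped RealInnerProductSpace BigOperators
open Metric Set

-- The right-hand side is the maximum of the left-hand side over `P`.
theorem sub_mul_sq_add_sq_div_two_le {γ Δ : ℝ} (N P : ℝ) (hΔ : 0 ≤ Δ) (hΔγ : Δ < 2 * γ) :
    -(γ * Δ * P ^ 2) + (N + Δ * P) ^ 2 / 2 ≤ N ^ 2 * γ / (2 * γ - Δ) := by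
  rw [le_div_iff₀ (by linarith)]
  nlinarith [mul_nonneg hΔ (sq_nonneg (N - (2 * γ - Δ) * P))]

theorem nep_poly_le {s γ Δ : ℝ} (hs : 0 ≤ s) (hγ₀ : 0 < γ) (hγ₁ : γ ≤ 1) (hΔ₀ : 0 ≤ Δ)
    (hΔγ : Δ ≤ γ) :
    (γ * (1 - Δ) + Δ * s) ^ 2 ≤ (2 + 4 * s ^ 2 - (s + γ) ^ 2) * (γ * (2 * γ - Δ)) := by
  have h₁ : 0 ≤ 3 + 8 * s ^ 2 - 2 * (s + γ) ^ 2 := by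
    nlinarith [sq_nonneg (1 - 2 * s), mul_le_mul hγ₁ hγ₁ hγ₀.le zero_le_one]
  have h₂ : 0 ≤ 2 + 4 * s ^ 2 - (s + γ) ^ 2 - (1 + s - γ) ^ 2 := by
    have := mul_nonneg (mul_nonneg hγ₀.le (sub_nonneg.2 hγ₁)) hs
    nlinarith [sq_nonneg (1 - 2 * s), mul_nonneg hγ₀.le (sub_nonneg.2 hγ₁)]
  have key : γ * ((2 + 4 * s ^ 2 - (s + γ) ^ 2) * (γ * (2 * γ - Δ)) - (γ * (1 - Δ) + Δ * s) ^ 2)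
      = (γ - Δ) * γ ^ 2 * (3 + 8 * s ^ 2 - 2 * (s + γ) ^ 2)
        + Δ * γ ^ 2 * (2 + 4 * s ^ 2 - (s + γ) ^ 2 - (1 + s - γ) ^ 2)
        + γ * Δ * (γ - Δ) * (s - γ) ^ 2 := by ring
  have hγΔ : 0 ≤ γ - Δ := sub_nonneg.2 hΔγ
  have : 0 ≤ γ * ((2 + 4 * s ^ 2 - (s + γ) ^ 2) * (γ * (2 * γ - Δ))
      - (γ * (1 - Δ) + Δ * s) ^ 2) := by
    rw [key]; positivity
  exact sub_nonneg.1 ((mul_nonneg_iff_of_pos_left hγ₀).1 this)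

theorem nep_error_le {s D r γ Δ N : ℝ} (P : ℝ) (hs : 0 ≤ s) (hD : 0 ≤ D) (hr : 0 ≤ r)
    (hγ₀ : 0 ≤ γ) (hγ₁ : γ ≤ 1) (hΔ₀ : 0 ≤ Δ) (hΔγ : Δ ≤ γ) (hγD : γ * D ≤ s * r)
    (hN₀ : 0 ≤ N) (hN : N ≤ (1 - Δ) * r + Δ * D) :
    γ * Δ * ((D + r) ^ 2 - P ^ 2) + (N + Δ * P) ^ 2 / 2 ≤ (2 + 4 * s ^ 2) * r ^ 2 := by
  rcases hγ₀.eq_or_lt with rfl | hγ₀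
  · obtain rfl : Δ = 0 := le_antisymm hΔγ hΔ₀
    nlinarith
  have hγD' : γ * (D + r) ≤ (s + γ) * r := by linarith
  have hA : γ * Δ * (D + r) ^ 2 ≤ (s + γ) ^ 2 * r ^ 2 := by
    calc γ * Δ * (D + r) ^ 2 ≤ (γ * (D + r)) ^ 2 := by nlinarith [sq_nonneg (D + r)]
      _ ≤ ((s + γ) * r) ^ 2 := pow_le_pow_left₀ (by positivity) hγD' 2
      _ = (s + γ) ^ 2 * r ^ 2 := by ring
  have hC : N ^ 2 * γ / (2 * γ - Δ) ≤ (2 + 4 * s ^ 2 - (s + γ) ^ 2) * r ^ 2 := by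
    have hγN : γ * N ≤ (γ * (1 - Δ) + Δ * s) * r := by nlinarith
    have hγN2 : (γ * N) ^ 2 ≤ (γ * (1 - Δ) + Δ * s) ^ 2 * r ^ 2 := by
      rw [← mul_pow]; exact pow_le_pow_left₀ (by positivity) hγN 2
    have hpoly := mul_le_mul_of_nonneg_right (nep_poly_le hs hγ₀ hγ₁ hΔ₀ hΔγ) (sq_nonneg r)
    rw [div_le_iff₀ (by linarith)]
    refine le_of_mul_le_mul_left ?_ hγ₀
    nlinarith
  nlinarith [sub_mul_sq_add_sq_div_two_le N P hΔ₀ (by linarith : Δ < 2 * γ)]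

theorem le_sub_mul_sq_of_mem_Icc {M η : ℝ} (hM : 0 < M) (hη : η ∈ Icc (1 / (4 * M)) (1 / (2 * M))) :
    3 / (16 * M) ≤ η - M * η ^ 2 := by
  obtain ⟨hη₁, hη₂⟩ := hη
  rw [div_le_iff₀ (by positivity)] at hη₁ ⊢
  rw [le_div_iff₀ (by positivity)] at hη₂
  nlinarith

theorem nep_contraction {β α s M η h r e : ℝ} (hβ : 0 < β) (hα : 0 < α)
    (hM : β / α * (4 + 8 * s ^ 2) ≤ M) (hη : η ∈ Icc (1 / (4 * M)) (1 / (2 * M)))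
    (hQG : r ^ 2 ≤ 2 / α * h) (he : e ≤ (2 + 4 * s ^ 2) * r ^ 2) :
    (1 - η) * h + β * η ^ 2 * e ≤ (1 - 3 / (16 * M)) * h := by
  have hh : 0 ≤ h := by
    have := (sq_nonneg r).trans hQG
    rwa [mul_nonneg_iff_of_pos_left (by positivity)] at this
  have hM₀ : 0 < M := lt_of_lt_of_le (by positivity) hM
  have hβe : β * e ≤ M * h :=
    calc β * e ≤ β * ((2 + 4 * s ^ 2) * (2 / α * h)) := by gcongr; exact he.trans (by gcongr)
      _ = β / α * (4 + 8 * s ^ 2) * h := by field_simp; ring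
      _ ≤ M * h := by gcongr
  nlinarith [mul_le_mul_of_nonneg_left hβe (sq_nonneg η),
    mul_le_mul_of_nonneg_right (le_sub_mul_sq_of_mem_Icc hM₀ hη) hh]

theorem exists_eq_mul_mem_Icc {ρ γ M : ℝ} (hγ : 0 ≤ γ) (hM : 0 < M)
    (hρ : ρ ∈ Icc (γ / (2 * M) / 2) (γ / (2 * M))) :
    ∃ η ∈ Icc (1 / (4 * M)) (1 / (2 * M)), ρ = η * γ := by
  rcases hγ.eq_or_lt with rfl | hγ
  · refine ⟨1 / (2 * M), ⟨?_, le_rfl⟩, ?_⟩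
    · gcongr; linarith
    · simpa using hρ
  · refine ⟨ρ / γ, ⟨?_, ?_⟩, (div_mul_cancel₀ ρ hγ.ne').symm⟩
    · rw [le_div_iff₀ hγ]; linarith [hρ.1, show γ / (2 * M) / 2 = 1 / (4 * M) * γ by ring]
    · rw [div_le_iff₀ hγ]; linarith [hρ.2, show γ / (2 * M) = 1 / (2 * M) * γ by ring]

theorem le_mul_exp_of_le_one_sub_mul {a : ℕ → ℝ} {u : ℝ}
    (ha : ∀ n, 1 ≤ n → 0 ≤ a n) (hstep : ∀ n, 1 ≤ n → a (n + 1) ≤ (1 - u) * a n) :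
    ∀ n, 1 ≤ n → a n ≤ a 1 * Real.exp (-(u * ((n : ℝ) - 1))) := by
  intro n hn
  induction n, hn using Nat.le_induction with
  | base => simp
  | succ n hn ih =>
    calc a (n + 1) ≤ (1 - u) * a n := hstep n hn
      _ ≤ Real.exp (-u) * (a 1 * Real.exp (-(u * ((n : ℝ) - 1)))) :=
          mul_le_mul (by linarith [Real.add_one_le_exp (-u)]) ih (ha n hn) (by positivity)
      _ = a 1 * Real.exp (-(u * (((n + 1 : ℕ) : ℝ) - 1))) := by
          rw [mul_left_comm, ← Real.exp_add]; push_cast; ring_nf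

section InnerProductSpace

variable {E : Type*} [NormedAddCommGroup E] [InnerProductSpace ℝ E]

theorem inner_add_mul_sq_le_of_mem_convexHull {V S : Set E} {a w x z : E} {c R : ℝ}
    (hc : 0 ≤ c) (hw : ∀ u ∈ V, ⟪a, w⟫ + c * ‖w - x‖ ^ 2 ≤ ⟪a, u⟫ + c * ‖u - x‖ ^ 2)
    (hR : ∀ u ∈ V ∩ S, ‖u - x‖ ≤ R) (hz : z ∈ convexHull ℝ (V ∩ S)) :
    ⟪a, w⟫ + c * ‖w - x‖ ^ 2 ≤ ⟪a, z⟫ + c * R ^ 2 := by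
  obtain ⟨u, hu, hle⟩ := ((innerₗ E a).concaveOn convex_univ).exists_le_of_mem_convexHull
    (subset_univ _) hz
  have : ‖u - x‖ ^ 2 ≤ R ^ 2 := pow_le_pow_left₀ (norm_nonneg _) (hR u hu) 2
  have := hw u hu.1
  simp only [innerₗ_apply_apply] at hle
  nlinarith

theorem norm_sub_sub_smul_sub_le (a b c : E) {t : ℝ} (ht₀ : 0 ≤ t) (ht₁ : t ≤ 1) :
    ‖(b - a) - t • (c - a)‖ ≤ (1 - t) * ‖b - a‖ + t * ‖c - b‖ := by
  calc ‖(b - a) - t • (c - a)‖ = ‖(1 - t) • (b - a) - t • (c - b)‖ := by congr 1; module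
    _ ≤ ‖(1 - t) • (b - a)‖ + ‖t • (c - b)‖ := norm_sub_le _ _
    _ = (1 - t) * ‖b - a‖ + t * ‖c - b‖ := by
        rw [norm_smul, norm_smul, Real.norm_of_nonneg (sub_nonneg.2 ht₁), Real.norm_of_nonneg ht₀]

theorem add_smul_mem_convexHull_insert {ι : Type*} [Fintype ι] {v : ι → E} {lam Δ : ι → ℝ}
    {x xst w z : E} {η : ℝ} (hlam : ∑ i, lam i = 1) (hx : x = ∑ i, lam i • v i)
    (hΔ : ∀ i, Δ i ∈ Icc 0 (lam i)) (hxst : xst = ∑ i, (lam i - Δ i) • v i + (∑ i, Δ i) • z)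
    (hη₀ : 0 ≤ η) (hη₁ : η ≤ 1) :
    x + η • ((xst - x) + (∑ i, Δ i) • (w - z)) ∈ convexHull ℝ (insert w (range v)) := by
  let c : Option ι → ℝ := fun o => o.elim (η * ∑ i, Δ i) fun i => lam i - η * Δ i
  let p : Option ι → E := fun o => o.elim w v
  have hsum : x + η • ((xst - x) + (∑ i, Δ i) • (w - z)) = ∑ o, c o • p o := by
    simp only [Fintype.sum_option, c, p, Option.elim_none, Option.elim_some, hxst, hx, sub_smul,
      Finset.sum_sub_distrib, mul_smul, ← Finset.smul_sum]
    module
  rw [hsum]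
  refine (convex_convexHull ℝ _).sum_mem (fun o _ => ?_) ?_ (fun o _ => subset_convexHull ℝ _ ?_)
  · rcases o with _ | i
    · exact mul_nonneg hη₀ (Finset.sum_nonneg fun i _ => (hΔ i).1)
    · have := (hΔ i).2
      have := mul_le_of_le_one_left (hΔ i).1 hη₁
      simp only [c, Option.elim_some]
      linarith
  · simp only [Fintype.sum_option, c, Option.elim_none, Option.elim_some, Finset.sum_sub_distrib,
      hlam, ← Finset.mul_sum]
    ring
  · rcases o with _ | i
    · exact mem_insert _ _
    · exact mem_insert_of_mem _ (mem_range_self i)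

variable [CompleteSpace E] {f : E → ℝ} {g : E → E}

theorem HasGradientAt.hasDerivAt_comp_add_smul {g₀ a v : E} {τ : ℝ}
    (hg : HasGradientAt f g₀ (a + τ • v)) :
    HasDerivAt (fun τ : ℝ => f (a + τ • v)) ⟪g₀, v⟫ τ := by
  have h := hg.hasFDerivAt.comp_hasDerivAt τ (((hasDerivAt_id τ).smul_const v).const_add a)
  simp only [id_eq, one_smul, InnerProductSpace.toDual_apply_apply] at h
  exact h

theorem ConvexOn.add_inner_gradient_le {g₀ a : E} (hf : ConvexOn ℝ univ f)
    (hg : HasGradientAt f g₀ a) (b : E) : f a + ⟪g₀, b - a⟫ ≤ f b := by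
  have hline : ConvexOn ℝ univ (fun τ : ℝ => f (a + τ • (b - a))) := by
    simpa [Function.comp_def, AffineMap.lineMap_apply, add_comm] using
      hf.comp_affineMap (AffineMap.lineMap a b)
  have hderiv := (show HasGradientAt f g₀ (a + (0 : ℝ) • (b - a)) by simpa using hg)
    |>.hasDerivAt_comp_add_smul
  have := hline.le_slope_of_hasDerivAt (mem_univ 0) (mem_univ 1) one_pos hderiv
  simp only [slope_def_field, one_smul, add_sub_cancel, zero_smul, add_zero, sub_zero,
    div_one] at this
  linarith

theorem le_add_inner_add_sq_of_lipschitz_gradient {β : ℝ}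
    (hgrad : ∀ y, HasGradientAt f (g y) y) (hsmooth : ∀ y z, ‖g y - g z‖ ≤ β * ‖y - z‖)
    (a b : E) : f b ≤ f a + ⟪g a, b - a⟫ + β / 2 * ‖b - a‖ ^ 2 := by
  set v := b - a
  let ψ : ℝ → ℝ := fun τ => f (a + τ • v) - τ * ⟪g a, v⟫ - β / 2 * ‖v‖ ^ 2 * τ ^ 2
  have hψ : ∀ τ : ℝ, HasDerivAt ψ (⟪g (a + τ • v) - g a, v⟫ - β * τ * ‖v‖ ^ 2) τ := by
    intro τ
    have h := (((hgrad (a + τ • v)).hasDerivAt_comp_add_smul).sub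
      (hasDerivAt_mul_const ⟪g a, v⟫)).sub
      ((hasDerivAt_pow 2 τ).const_mul (β / 2 * ‖v‖ ^ 2))
    exact h.congr_deriv (by rw [inner_sub_left]; ring)
  have hanti : AntitoneOn ψ (Icc 0 1) := by
    refine antitoneOn_of_deriv_nonpos (convex_Icc 0 1)
      (fun τ _ => (hψ τ).continuousAt.continuousWithinAt)
      (fun τ _ => (hψ τ).differentiableAt.differentiableWithinAt) fun τ hτ => ?_
    rw [interior_Icc] at hτ
    rw [(hψ τ).deriv, sub_nonpos]
    calc ⟪g (a + τ • v) - g a, v⟫ ≤ ‖g (a + τ • v) - g a‖ * ‖v‖ := real_inner_le_norm _ _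
      _ ≤ β * ‖τ • v‖ * ‖v‖ := by
          gcongr
          simpa using hsmooth (a + τ • v) a
      _ = β * τ * ‖v‖ ^ 2 := by rw [norm_smul, Real.norm_of_nonneg hτ.1.le]; ring
  have := hanti (left_mem_Icc.2 zero_le_one) (right_mem_Icc.2 zero_le_one) zero_le_one
  simp only [ψ, v, zero_smul, add_zero, zero_mul, one_smul, add_sub_cancel, one_mul, one_pow,
    mul_one, sub_zero] at this
  linarith

theorem le_add_inner_add_sq_of_minimizes {β : ℝ} (hgrad : ∀ y, HasGradientAt f (g y) y)
    (hsmooth : ∀ y z, ‖g y - g z‖ ≤ β * ‖y - z‖) {C : Set E} {x x' : E}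
    (hx' : (∀ y ∈ C, ⟪g x, x'⟫ + β / 2 * ‖x' - x‖ ^ 2 ≤ ⟪g x, y⟫ + β / 2 * ‖y - x‖ ^ 2) ∨
      ∀ y ∈ C, f x' ≤ f y) :
    ∀ y ∈ C, f x' ≤ f x + ⟪g x, y - x⟫ + β / 2 * ‖y - x‖ ^ 2 := by
  intro y hy
  rcases hx' with hmodel | hmin
  · have h₁ := le_add_inner_add_sq_of_lipschitz_gradient hgrad hsmooth x x'
    have h₂ := hmodel y hy
    rw [inner_sub_right] at h₁ ⊢
    linarith
  · exact (hmin y hy).trans (le_add_inner_add_sq_of_lipschitz_gradient hgrad hsmooth x y)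

theorem nep_step_gap_le {β κ D η : ℝ} (hfconv : ConvexOn ℝ univ f)
    (hgrad : ∀ y, HasGradientAt f (g y) y) (hβ : 0 ≤ β) (hκ : 0 ≤ κ)
    {V S : Set E} (hD : ∀ u ∈ S, ∀ u' ∈ S, ‖u - u'‖ ≤ D)
    {ι : Type*} [Fintype ι] {v : ι → E} {lam Δ : ι → ℝ} {x x' xst w z : E}
    (hlam : ∑ i, lam i = 1) (hx : x = ∑ i, lam i • v i)
    (hxst : xst ∈ S) (hzS : z ∈ S) (hz : z ∈ convexHull ℝ (V ∩ S))
    (hΔ : ∀ i, Δ i ∈ Icc 0 (lam i)) (hΔ₁ : ∑ i, Δ i ≤ 1)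
    (hxst_eq : xst = ∑ i, (lam i - Δ i) • v i + (∑ i, Δ i) • z)
    (hη₀ : 0 ≤ η) (hη₁ : η ≤ 1)
    (hw : ∀ u ∈ V, ⟪g x, w⟫ + κ * ‖w - x‖ ^ 2 ≤ ⟪g x, u⟫ + κ * ‖u - x‖ ^ 2)
    (hx' : ∀ y ∈ convexHull ℝ (insert w (range v)),
      f x' ≤ f x + ⟪g x, y - x⟫ + β / 2 * ‖y - x‖ ^ 2) :
    ∃ N, 0 ≤ N ∧ N ≤ (1 - ∑ i, Δ i) * ‖x - xst‖ + (∑ i, Δ i) * D ∧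
      f x' - f xst ≤ (1 - η) * (f x - f xst)
        + η * (∑ i, Δ i) * κ * ((D + ‖x - xst‖) ^ 2 - ‖w - x‖ ^ 2)
        + β / 2 * η ^ 2 * (N + (∑ i, Δ i) * ‖w - x‖) ^ 2 := by
  set r := ‖x - xst‖
  set Δt := ∑ i, Δ i
  set P := ‖w - x‖
  set N := ‖(xst - x) - Δt • (z - x)‖
  have hΔt₀ : 0 ≤ Δt := Finset.sum_nonneg fun i _ => (hΔ i).1
  refine ⟨N, norm_nonneg _, ?_, ?_⟩
  · refine (norm_sub_sub_smul_sub_le x xst z hΔt₀ hΔ₁).trans ?_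
    rw [norm_sub_rev xst x]
    gcongr
    exact hD z hzS xst hxst
  have hnorm : ‖(xst - x) + Δt • (w - z)‖ ≤ N + Δt * P :=
    calc ‖(xst - x) + Δt • (w - z)‖ = ‖((xst - x) - Δt • (z - x)) + Δt • (w - x)‖ := by
          congr 1; module
      _ ≤ N + ‖Δt • (w - x)‖ := norm_add_le _ _
      _ = N + Δt * P := by rw [norm_smul, Real.norm_of_nonneg hΔt₀]
  have horacle : ⟪g x, w - z⟫ ≤ κ * ((D + r) ^ 2 - P ^ 2) := by
    have := inner_add_mul_sq_le_of_mem_convexHull (R := D + r) hκ hw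
      (fun u hu => (norm_sub_le_norm_sub_add_norm_sub u xst x).trans
        (by rw [norm_sub_rev xst x]; gcongr; exact hD u hu.2 xst hxst)) hz
    rw [inner_sub_right]
    linarith
  have hconv := hfconv.add_inner_gradient_le (hgrad x) xst
  -- compare with the point of the hull that moves from `x` towards `xst`, with the mass `Δt`
  -- that `xst` puts on `z` carried by the new vertex `w` instead
  have hy := hx' _ (add_smul_mem_convexHull_insert (w := w) hlam hx hΔ hxst_eq hη₀ hη₁)
  rw [add_sub_cancel_left, inner_smul_right, inner_add_right, inner_smul_right, norm_smul,
    Real.norm_of_nonneg hη₀] at hy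
  change f x' ≤ f x + η * (⟪g x, xst - x⟫ + Δt * ⟪g x, w - z⟫)
    + β / 2 * (η * ‖(xst - x) + Δt • (w - z)‖) ^ 2 at hy
  have e1 := mul_le_mul_of_nonneg_left (le_sub_iff_add_le'.2 hconv) hη₀
  have e2 := mul_le_mul_of_nonneg_left horacle (mul_nonneg hη₀ hΔt₀)
  have e3 : β / 2 * (η * ‖(xst - x) + Δt • (w - z)‖) ^ 2 ≤ β / 2 * η ^ 2 * (N + Δt * P) ^ 2 := by
    rw [mul_pow, ← mul_assoc]; gcongr
  linarith

theorem nep_step_contraction {β α c D M ρ : ℝ} (hfconv : ConvexOn ℝ univ f)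
    (hgrad : ∀ y, HasGradientAt f (g y) y) (hβ : 0 < β) (hα : 0 < α) (hc : 0 ≤ c)
    (hM₁ : β / α * (4 + 8 * (c * D) ^ 2) ≤ M) (hM₂ : 1 / 2 ≤ M)
    {V S : Set E} (hD : ∀ u ∈ S, ∀ u' ∈ S, ‖u - u'‖ ≤ D)
    {ι : Type*} [Fintype ι] {v : ι → E} {lam Δ : ι → ℝ} {x x' xst w z : E}
    (hlam : ∑ i, lam i = 1) (hx : x = ∑ i, lam i • v i)
    (hQG : ‖x - xst‖ ^ 2 ≤ 2 / α * (f x - f xst))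
    (hxst : xst ∈ S) (hzS : z ∈ S) (hz : z ∈ convexHull ℝ (V ∩ S))
    (hΔ : ∀ i, Δ i ∈ Icc 0 (lam i))
    (hxst_eq : xst = ∑ i, (lam i - Δ i) • v i + (∑ i, Δ i) • z)
    (hΔsum : ∑ i, Δ i ≤ min (c * ‖x - xst‖) 1)
    (hρ : ρ ∈ Icc (min (c * ‖x - xst‖) 1 / (2 * M) / 2) (min (c * ‖x - xst‖) 1 / (2 * M)))
    (hw : ∀ u ∈ V, ⟪g x, w⟫ + β * ρ * ‖w - x‖ ^ 2 ≤ ⟪g x, u⟫ + β * ρ * ‖u - x‖ ^ 2)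
    (hx' : ∀ y ∈ convexHull ℝ (insert w (range v)),
      f x' ≤ f x + ⟪g x, y - x⟫ + β / 2 * ‖y - x‖ ^ 2) :
    f x' - f xst ≤ (1 - 3 / (16 * M)) * (f x - f xst) := by
  set r := ‖x - xst‖
  set γ := min (c * r) 1
  have hγ₀ : 0 ≤ γ := le_min (by positivity) zero_le_one
  have hγ₁ : γ ≤ 1 := min_le_right _ _
  obtain ⟨η, hη, rfl⟩ := exists_eq_mul_mem_Icc hγ₀ (by linarith) hρ
  have hη₀ : 0 ≤ η := le_trans (by positivity) hη.1
  have hη₁ : η ≤ 1 := hη.2.trans (by rw [div_le_one (by positivity)]; linarith)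
  have hΔt₀ : 0 ≤ ∑ i, Δ i := Finset.sum_nonneg fun i _ => (hΔ i).1
  have hD₀ : 0 ≤ D := by simpa using hD xst hxst xst hxst
  have hγD : γ * D ≤ c * D * r := by nlinarith [min_le_left (c * r) 1]
  obtain ⟨N, hN₀, hN, hgap⟩ := nep_step_gap_le hfconv hgrad hβ.le (by positivity) hD hlam hx hxst
    hzS hz hΔ (hΔsum.trans hγ₁) hxst_eq hη₀ hη₁ hw hx'
  have herr := nep_error_le ‖w - x‖ (by positivity) hD₀ (norm_nonneg _) hγ₀ hγ₁ hΔt₀ hΔsum hγD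
    hN₀ hN
  calc f x' - f xst
      ≤ (1 - η) * (f x - f xst) + β * η ^ 2 * (γ * (∑ i, Δ i) * ((D + r) ^ 2 - ‖w - x‖ ^ 2)
        + (N + (∑ i, Δ i) * ‖w - x‖) ^ 2 / 2) := hgap.trans_eq (by ring)
    _ ≤ (1 - 3 / (16 * M)) * (f x - f xst) := nep_contraction hβ hα hM₁ hη hQG herr

end InnerProductSpace

theorem fw_nep_polytope_linear_rate_adaptive_general {d : ℕ}
    (V : Set (EuclideanSpace ℝ (Fin d))) (hVfin : V.Finite)
    (K : Set (EuclideanSpace ℝ (Fin d))) (hK : K = convexHull ℝ V)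
    (f : EuclideanSpace ℝ (Fin d) → ℝ)
    (g : EuclideanSpace ℝ (Fin d) → EuclideanSpace ℝ (Fin d))
    (hfconv : ConvexOn ℝ Set.univ f)
    (hgrad : ∀ y, HasGradientAt f (g y) y)
    (β : ℝ) (hβ : 0 < β)
    (hsmooth : ∀ y z, ‖g y - g z‖ ≤ β * ‖y - z‖)
    (fstar : ℝ) (hfstar : ∀ y ∈ K, fstar ≤ f y)
    (Xstar : Set (EuclideanSpace ℝ (Fin d)))
    (hXstar : Xstar = {y | y ∈ K ∧ f y = fstar}) (hXne : Xstar.Nonempty)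
    -- quadratic growth
    (α : ℝ) (hα : 0 < α)
    (hQG : ∀ y ∈ K, infDist y Xstar ^ 2 ≤ 2 / α * (f y - fstar))
    -- the set F*
    (Fstar : Set (EuclideanSpace ℝ (Fin d)))
    (hXF : Xstar ⊆ Fstar)
    (hFvert : ∀ y ∈ Fstar, y ∈ convexHull ℝ (V ∩ Fstar))
    (DF : ℝ) (hDF : ∀ u ∈ Fstar, ∀ w ∈ Fstar, ‖u - w‖ ≤ DF)
    -- constants
    (μ Mstar : ℝ) (hμ : 0 < μ)
    (hMstar : Mstar = max (β / α * (4 + 8 * d * μ ^ 2 * DF ^ 2)) (1 / 2))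
    -- adaptive step-size parameters
    (ρ : ℕ → ℝ)
    -- the iterates and their vertex decompositions
    (x : ℕ → EuclideanSpace ℝ (Fin d))
    (k : ℕ → ℕ) (vv : ∀ t : ℕ, Fin (k t) → EuclideanSpace ℝ (Fin d))
    (lam : ∀ t : ℕ, Fin (k t) → ℝ) (w : ℕ → EuclideanSpace ℝ (Fin d))
    (hρ : ∀ t : ℕ, 1 ≤ t → ρ t ∈ Set.Icc
      (min (Real.sqrt d * μ * infDist (x t) Xstar) 1 / (2 * Mstar) / 2)
      (min (Real.sqrt d * μ * infDist (x t) Xstar) 1 / (2 * Mstar)))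
    (hvvV : ∀ t, 1 ≤ t → ∀ i, vv t i ∈ V)
    (hlam0 : ∀ t, 1 ≤ t → ∀ i, 0 ≤ lam t i)
    (hlam1 : ∀ t, 1 ≤ t → ∑ i, lam t i = 1)
    (hxdecomp : ∀ t, 1 ≤ t → x t = ∑ i, lam t i • vv t i)
    (hwopt : ∀ t, 1 ≤ t → ∀ u ∈ V,
      ⟪g (x t), w t⟫ + β * ρ t * ‖w t - x t‖ ^ 2
        ≤ ⟪g (x t), u⟫ + β * ρ t * ‖u - x t‖ ^ 2)
    (hstep : ∀ t, 1 ≤ t →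
      (x (t + 1) ∈ convexHull ℝ (insert (w t) (Set.range (vv t))) ∧
        ∀ y ∈ convexHull ℝ (insert (w t) (Set.range (vv t))),
          ⟪g (x t), x (t + 1)⟫ + β / 2 * ‖x (t + 1) - x t‖ ^ 2
            ≤ ⟪g (x t), y⟫ + β / 2 * ‖y - x t‖ ^ 2) ∨
      (x (t + 1) ∈ convexHull ℝ (insert (w t) (Set.range (vv t))) ∧
        ∀ y ∈ convexHull ℝ (insert (w t) (Set.range (vv t))), f (x (t + 1)) ≤ f y))
    -- the vertex-decomposition property relative to the closest optimal point
    (hclose : ∀ t, 1 ≤ t → ∀ xst ∈ Xstar, (∀ y ∈ Xstar, ‖x t - xst‖ ≤ ‖x t - y‖) →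
      ∃ Δ : Fin (k t) → ℝ, ∃ z ∈ Fstar,
        (∀ i, Δ i ∈ Set.Icc 0 (lam t i)) ∧
        xst = ∑ i, (lam t i - Δ i) • vv t i + (∑ i, Δ i) • z ∧
        ∑ i, Δ i ≤ min (Real.sqrt d * μ * ‖x t - xst‖) 1) :
    ∀ t : ℕ, 1 ≤ t →
      f (x t) - fstar ≤ (f (x 1) - fstar)
        * Real.exp (-(3 * ((t : ℝ) - 1) / (16 * Mstar))) := by
  have hfcont : Continuous f :=
    continuous_iff_continuousAt.2 fun y => (hgrad y).hasFDerivAt.continuousAt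
  have hXclosed : IsClosed Xstar := hXstar ▸
    (hK ▸ hVfin.isCompact_convexHull ℝ).isClosed.inter (isClosed_eq hfcont continuous_const)
  have hxK : ∀ t, 1 ≤ t → x t ∈ K := fun t ht => hK ▸ hxdecomp t ht ▸
    (convex_convexHull ℝ V).sum_mem (fun i _ => hlam0 t ht i) (hlam1 t ht)
      fun i _ => subset_convexHull ℝ V (hvvV t ht i)
  have hM₁ : β / α * (4 + 8 * (Real.sqrt d * μ * DF) ^ 2) ≤ Mstar := by
    rw [hMstar, mul_pow, mul_pow, Real.sq_sqrt d.cast_nonneg]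
    exact le_of_eq_of_le (by ring) (le_max_left _ _)
  have hM₂ : 1 / 2 ≤ Mstar := hMstar ▸ le_max_right _ _
  intro t ht
  refine (le_mul_exp_of_le_one_sub_mul (a := fun t => f (x t) - fstar) (u := 3 / (16 * Mstar))
    (fun t ht => sub_nonneg.2 (hfstar _ (hxK t ht))) (fun t ht => ?_) t ht).trans_eq (by ring_nf)
  obtain ⟨xst, hxstX, hdist⟩ := hXclosed.exists_infDist_eq_dist hXne (x t)
  have hnear : ∀ y ∈ Xstar, ‖x t - xst‖ ≤ ‖x t - y‖ := fun y hy => by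
    simpa only [← dist_eq_norm, ← hdist] using infDist_le_dist_of_mem hy
  obtain ⟨Δ, z, hzF, hΔ, hxst, hΔsum⟩ := hclose t ht xst hxstX hnear
  have hρt := hρ t ht
  have hQGt := hQG (x t) (hxK t ht)
  have hfxst : f xst = fstar := (hXstar ▸ hxstX).2
  rw [hdist, dist_eq_norm] at hρt hQGt
  rw [← hfxst] at hQGt ⊢
  exact nep_step_contraction hfconv hgrad hβ hα (by positivity) hM₁ hM₂ hDF (hlam1 t ht)
    (hxdecomp t ht) hQGt (hXF hxstX) hzF (hFvert z hzF) hΔ hxst hΔsum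
    hρt (hwopt t ht)
    (le_add_inner_add_sq_of_minimizes hgrad hsmooth ((hstep t ht).imp And.right And.right))

/-- linear convergence of the NEP oracle-based fully-corrective
Frank-Wolfe variant for polytopes with adaptive step-sizes (Theorem 6). -/
theorem fw_nep_polytope_linear_rate_adaptive {d : ℕ}
    (V : Set (EuclideanSpace ℝ (Fin d))) (hVfin : V.Finite)
    (K : Set (EuclideanSpace ℝ (Fin d))) (hK : K = convexHull ℝ V)
    (hVext : V = K.extremePoints ℝ)
    (f : EuclideanSpace ℝ (Fin d) → ℝ)
    (g : EuclideanSpace ℝ (Fin d) → EuclideanSpace ℝ (Fin d))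
    (hfconv : ConvexOn ℝ Set.univ f)
    (hgrad : ∀ y, HasGradientAt f (g y) y)
    (β : ℝ) (hβ : 0 < β)
    (hsmooth : ∀ y z, ‖g y - g z‖ ≤ β * ‖y - z‖)
    (fstar : ℝ) (hfstar : ∀ y ∈ K, fstar ≤ f y)
    (Xstar : Set (EuclideanSpace ℝ (Fin d)))
    (hXstar : Xstar = {y | y ∈ K ∧ f y = fstar}) (hXne : Xstar.Nonempty)
    -- quadratic growth
    (α : ℝ) (hα : 0 < α)
    (hQG : ∀ y ∈ K, infDist y Xstar ^ 2 ≤ 2 / α * (f y - fstar))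
    -- the set F*
    (Fstar : Set (EuclideanSpace ℝ (Fin d)))
    (hFK : Fstar ⊆ K) (hFconv : Convex ℝ Fstar) (hXF : Xstar ⊆ Fstar)
    (hFvert : ∀ y ∈ Fstar, y ∈ convexHull ℝ (V ∩ Fstar))
    (DF : ℝ) (hDF : ∀ u ∈ Fstar, ∀ w ∈ Fstar, ‖u - w‖ ≤ DF)
    -- constants
    (μ Mstar : ℝ) (hμ : 0 < μ)
    (hMstar : Mstar = max (β / α * (4 + 8 * d * μ ^ 2 * DF ^ 2)) (1 / 2))
    -- adaptive step-size parameters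
    (ρ : ℕ → ℝ)
    -- the iterates and their vertex decompositions
    (x : ℕ → EuclideanSpace ℝ (Fin d))
    (k : ℕ → ℕ) (vv : ∀ t : ℕ, Fin (k t) → EuclideanSpace ℝ (Fin d))
    (lam : ∀ t : ℕ, Fin (k t) → ℝ) (w : ℕ → EuclideanSpace ℝ (Fin d))
    (hx1 : x 1 ∈ V)
    (hρ : ∀ t : ℕ, 1 ≤ t → ρ t ∈ Set.Icc
      (min (Real.sqrt d * μ * infDist (x t) Xstar) 1 / (2 * Mstar) / 2)
      (min (Real.sqrt d * μ * infDist (x t) Xstar) 1 / (2 * Mstar)))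
    (hvvV : ∀ t, 1 ≤ t → ∀ i, vv t i ∈ V)
    (hlam0 : ∀ t, 1 ≤ t → ∀ i, 0 ≤ lam t i)
    (hlam1 : ∀ t, 1 ≤ t → ∑ i, lam t i = 1)
    (hxdecomp : ∀ t, 1 ≤ t → x t = ∑ i, lam t i • vv t i)
    (hwV : ∀ t, 1 ≤ t → w t ∈ V)
    (hwopt : ∀ t, 1 ≤ t → ∀ u ∈ V,
      ⟪g (x t), w t⟫ + β * ρ t * ‖w t - x t‖ ^ 2
        ≤ ⟪g (x t), u⟫ + β * ρ t * ‖u - x t‖ ^ 2)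
    (hstep : ∀ t, 1 ≤ t →
      (x (t + 1) ∈ convexHull ℝ (insert (w t) (Set.range (vv t))) ∧
        ∀ y ∈ convexHull ℝ (insert (w t) (Set.range (vv t))),
          ⟪g (x t), x (t + 1)⟫ + β / 2 * ‖x (t + 1) - x t‖ ^ 2
            ≤ ⟪g (x t), y⟫ + β / 2 * ‖y - x t‖ ^ 2) ∨
      (x (t + 1) ∈ convexHull ℝ (insert (w t) (Set.range (vv t))) ∧
        ∀ y ∈ convexHull ℝ (insert (w t) (Set.range (vv t))), f (x (t + 1)) ≤ f y))
    -- the vertex-decomposition property relative to the closest optimal point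
    (hclose : ∀ t, 1 ≤ t → ∀ xst ∈ Xstar, (∀ y ∈ Xstar, ‖x t - xst‖ ≤ ‖x t - y‖) →
      ∃ Δ : Fin (k t) → ℝ, ∃ z ∈ Fstar,
        (∀ i, Δ i ∈ Set.Icc 0 (lam t i)) ∧
        xst = ∑ i, (lam t i - Δ i) • vv t i + (∑ i, Δ i) • z ∧
        ∑ i, Δ i ≤ min (Real.sqrt d * μ * ‖x t - xst‖) 1) :
    ∀ t : ℕ, 1 ≤ t →
      f (x t) - fstar ≤ (f (x 1) - fstar)
        * Real.exp (-(3 * ((t : ℝ) - 1) / (16 * Mstar))) :=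
  fw_nep_polytope_linear_rate_adaptive_general V hVfin K hK f g hfconv hgrad β hβ hsmooth fstar
    hfstar Xstar hXstar hXne α hα hQG Fstar hXF hFvert DF hDF μ Mstar hμ hMstar ρ x k vv lam w hρ
    hvvV hlam0 hlam1 hxdecomp hwopt hstep hclose
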